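/- Escalation occurs in the 0,1-game: there exist a strategy st_A full for agent A and a strategy st_B full for agent B, both with st2g(st_A, A) = st2g(st_B, B) = g01 (so the family is consistent), such that their sum st_A ⊕ st_B is not a convergent strategy profile. -/

import Mathlib

/-- The two agents of the game. -/
inductive Agent : Type
  | A
  | B

/-- The two choices: down and right. -/
inductive Choice : Type
  | d
  | r

/-- Payoff assignments for the agents. -/
abbrev Payoffs : Type := Agent → ℝ

/-! ### Strategy profiles: final coalgebra of `X ↦ ℝ^P + P × Choice × X × X` -/

def StratProfF : PFunctor.{0} :=
  ⟨Payoffs ⊕ (Agent × Choice), fun x =>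
    match x with
    | Sum.inl _ => Empty
    | Sum.inr _ => Bool⟩

/-- Strategy profiles: the final coalgebra (M-type) of `StratProfF`. -/
abbrev StratProf : Type := StratProfF.M

/-- Leaf strategy profile `⟨⟨f⟩⟩`. -/
def sleaf (f : Payoffs) : StratProf :=
  PFunctor.M.mk ⟨Sum.inl f, fun (e : Empty) => e.elim⟩

/-- Node strategy profile `⟨⟨p, c, s_d, s_r⟩⟩` (`true` child = down, `false` child = right). -/
def snode (p : Agent) (c : Choice) (sd sr : StratProf) : StratProf :=
  PFunctor.M.mk ⟨Sum.inr (p, c), fun (b : Bool) => if b then sd else sr⟩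

/-- Convergence `↓s`: the least predicate closed under the given rules. -/
inductive Conv : StratProf → Prop
  | leaf (f : Payoffs) : Conv (sleaf f)
  | down (p : Agent) (sd sr : StratProf) : Conv sd → Conv (snode p Choice.d sd sr)
  | right (p : Agent) (sd sr : StratProf) : Conv sr → Conv (snode p Choice.r sd sr)

/-- One step of the strong-convergence condition. -/
def SConvStep (R : StratProf → Prop) (s : StratProf) : Prop :=
  (∃ f, s = sleaf f) ∨
    ∃ p c sd sr, s = snode p c sd sr ∧ Conv s ∧ R sd ∧ R sr

/-- Strong convergence `⇓s`: the largest predicate `R` with `R ≤ SConvStep R`. -/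
def SConv (s : StratProf) : Prop :=
  ∃ R : StratProf → Prop, R s ∧ ∀ t, R t → SConvStep R t

/-- One step of the `□Φ` condition. -/
def BoxStep (Φ : StratProf → Prop) (R : StratProf → Prop) (t : StratProf) : Prop :=
  Φ t ∧ ∀ p c sd sr, t = snode p c sd sr → R sd ∧ R sr

/-- The modality `□Φ`: the largest predicate `R` with `R ≤ BoxStep Φ R`. -/
def Box (Φ : StratProf → Prop) (s : StratProf) : Prop :=
  ∃ R : StratProf → Prop, R s ∧ ∀ t, R t → BoxStep Φ R t

/-- The partial payoff function `ŝ`, as an inductively defined graph relation: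
`PayoffRel s f` means "`ŝ` is defined and equals `f`". -/
inductive PayoffRel : StratProf → Payoffs → Prop
  | leaf (f : Payoffs) : PayoffRel (sleaf f) f
  | down (p : Agent) (sd sr : StratProf) (f : Payoffs) :
      PayoffRel sd f → PayoffRel (snode p Choice.d sd sr) f
  | right (p : Agent) (sd sr : StratProf) (f : Payoffs) :
      PayoffRel sr f → PayoffRel (snode p Choice.r sd sr) f

/-- Bisimilarity `s' ~ s`: the largest relation satisfying the coinductive clauses. -/
def Bisim (s' s : StratProf) : Prop :=
  ∃ R : StratProf → StratProf → Prop, R s' s ∧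
    ∀ t' t, R t' t →
      ((∃ f, t' = sleaf f ∧ t = sleaf f) ∨
        ∃ p c td' tr' td tr,
          t' = snode p c td' tr' ∧ t = snode p c td tr ∧ R td' td ∧ R tr' tr)

/-- The subprofile relation `s' ≼ s`: the least relation closed under the given rules. -/
inductive Subprof : StratProf → StratProf → Prop
  | bisim {s' s : StratProf} : Bisim s' s → Subprof s' s
  | down {s' : StratProf} {p : Agent} {c : Choice} {sd sr : StratProf} :
      Subprof s' sd → Subprof s' (snode p c sd sr)
  | right {s' : StratProf} {p : Agent} {c : Choice} {sd sr : StratProf} :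
      Subprof s' sr → Subprof s' (snode p c sd sr)

/-! ### Games: final coalgebra of `X ↦ ℝ^P + P × X × X` -/

def GameF : PFunctor.{0} :=
  ⟨Payoffs ⊕ Agent, fun x =>
    match x with
    | Sum.inl _ => Empty
    | Sum.inr _ => Bool⟩

/-- Games: the final coalgebra (M-type) of `GameF`. -/
abbrev Game : Type := GameF.M

/-- Leaf game `⟨f⟩`. -/
def gleaf (f : Payoffs) : Game :=
  PFunctor.M.mk ⟨Sum.inl f, fun (e : Empty) => e.elim⟩

/-- Node game `⟨p, g_d, g_r⟩`. -/
def gnode (p : Agent) (gd gr : Game) : Game :=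
  PFunctor.M.mk ⟨Sum.inr p, fun (b : Bool) => if b then gd else gr⟩

/-- The corecursive function `game : StratProf → Game` erasing the choices. -/
def gameOf : StratProf → Game :=
  PFunctor.M.corec (fun s =>
    match PFunctor.M.dest s with
    | ⟨Sum.inl f, _⟩ => ⟨Sum.inl f, fun (e : Empty) => e.elim⟩
    | ⟨Sum.inr pc, k⟩ => ⟨Sum.inr pc.1, k⟩)

/-! ### Strategies: final coalgebra of `X ↦ ℝ^P + (P + Choice) × X × X` -/

def StratF : PFunctor.{0} :=
  ⟨Payoffs ⊕ (Agent ⊕ Choice), fun x =>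
    match x with
    | Sum.inl _ => Empty
    | Sum.inr _ => Bool⟩

/-- Strategies: the final coalgebra (M-type) of `StratF`. -/
abbrev Strat : Type := StratF.M

/-- Leaf strategy `⟨f⟩`. -/
def stleaf (f : Payoffs) : Strat :=
  PFunctor.M.mk ⟨Sum.inl f, fun (e : Empty) => e.elim⟩

/-- Node strategy `⟨x, st₁, st₂⟩` with `x` an agent or a choice. -/
def stnode (x : Agent ⊕ Choice) (s1 s2 : Strat) : Strat :=
  PFunctor.M.mk ⟨Sum.inr x, fun (b : Bool) => if b then s1 else s2⟩

/-- The corecursive function `st2g` replacing choice labels by the given agent. -/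
def st2gStep (p : Agent) (t : Strat) : GameF.Obj Strat :=
  match PFunctor.M.dest t with
  | ⟨Sum.inl f, _⟩ => ⟨Sum.inl f, fun (e : Empty) => e.elim⟩
  | ⟨Sum.inr (Sum.inl q), k⟩ => ⟨Sum.inr q, k⟩
  | ⟨Sum.inr (Sum.inr _), k⟩ => ⟨Sum.inr p, k⟩

/-- The corecursive function `st2g` replacing choice labels by the given agent. -/
def st2g (st : Strat) (p : Agent) : Game :=
  PFunctor.M.corec (st2gStep p) st

/-- `st` is full for `p`: coinductively, the agent `p` occurs nowhere as a label. -/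
def Full (p : Agent) (st : Strat) : Prop :=
  ∃ R : Strat → Prop, R st ∧ ∀ t, R t →
    (∃ f, t = stleaf f) ∨
      ∃ x s1 s2, t = stnode x s1 s2 ∧ x ≠ Sum.inl p ∧ R s1 ∧ R s2

/-- A one-level view of a strategy. -/
inductive StratView : Type
  | leaf (f : Payoffs)
  | node (x : Agent ⊕ Choice) (k : Bool → Strat)

/-- Destruct a strategy into its one-level view. -/
def stratView (t : Strat) : StratView :=
  match PFunctor.M.dest t with
  | ⟨Sum.inl f, _⟩ => StratView.leaf f
  | ⟨Sum.inr x, k⟩ => StratView.node x k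

/-- One corecursion step for the sum of the strategy of `A` (first component)
and the strategy of `B` (second component). -/
def oplusStep : Strat × Strat → StratProfF.Obj (Strat × Strat) := fun q =>
  match stratView q.1, stratView q.2 with
  | StratView.leaf f, _ => ⟨Sum.inl f, fun (e : Empty) => e.elim⟩
  | StratView.node _ _, StratView.leaf f => ⟨Sum.inl f, fun (e : Empty) => e.elim⟩
  | StratView.node (Sum.inr c) k1, StratView.node (Sum.inl p') k2 =>
      ⟨Sum.inr (p', c), fun (b : Bool) => (k1 b, k2 b)⟩
  | StratView.node (Sum.inr c) k1, StratView.node (Sum.inr _) k2 =>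
      ⟨Sum.inr (Agent.A, c), fun (b : Bool) => (k1 b, k2 b)⟩
  | StratView.node (Sum.inl p') k1, StratView.node (Sum.inr c) k2 =>
      ⟨Sum.inr (p', c), fun (b : Bool) => (k1 b, k2 b)⟩
  | StratView.node (Sum.inl p') k1, StratView.node (Sum.inl _) k2 =>
      ⟨Sum.inr (p', Choice.d), fun (b : Bool) => (k1 b, k2 b)⟩

/-- The sum `st_A ⊕ st_B` of the strategies of the two agents. -/
def oplus (stA stB : Strat) : StratProf :=
  PFunctor.M.corec oplusStep (stA, stB)

/-! ### Equilibria -/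

/-- The local equilibrium condition `PE`. -/
def PE (s : StratProf) : Prop :=
  SConv s ∧
    (∀ p sd sr fd fr, s = snode p Choice.d sd sr →
        PayoffRel sd fd → PayoffRel sr fr → fd p ≥ fr p) ∧
    (∀ p sd sr fd fr, s = snode p Choice.r sd sr →
        PayoffRel sd fd → PayoffRel sr fr → fr p ≥ fd p)

/-- Subgame perfect equilibrium: `SPE = □PE`. -/
def SPE : StratProf → Prop := Box PE

/-- Convertibility `s ⊢p⊣ s'`: the inductively defined deviation relation of agent `p`. -/
inductive Convert (p : Agent) : StratProf → StratProf → Prop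
  | bisim {s s' : StratProf} : Bisim s s' → Convert p s s'
  | own {c c' : Choice} {s1 s2 s1' s2' : StratProf} :
      Convert p s1 s1' → Convert p s2 s2' →
      Convert p (snode p c s1 s2) (snode p c' s1' s2')
  | other {p' : Agent} {c : Choice} {s1 s2 s1' s2' : StratProf} :
      Convert p s1 s1' → Convert p s2 s2' →
      Convert p (snode p' c s1 s2) (snode p' c s1' s2')

/-- Nash equilibrium: no agent can improve her payoff by converting
(the inequality being required whenever both payoffs are defined). -/
def Nash (s : StratProf) : Prop :=
  ∀ p s' f f', Convert p s s' → PayoffRel s f → PayoffRel s' f' → f p ≥ f' p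

/-! ### The 0,1-game -/

/-- The payoff function `A ↦ 0, B ↦ 1`. -/
def f01 : Payoffs := fun p => match p with | Agent.A => 0 | Agent.B => 1

/-- The payoff function `A ↦ 1, B ↦ 0`. -/
def f10 : Payoffs := fun p => match p with | Agent.A => 1 | Agent.B => 0

/-- `S01 true = S0` and `S01 false = S1`: the largest pair of predicates
characterizing the strategy profiles of the 0,1-game. -/
def S01 (i : Bool) (s : StratProf) : Prop :=
  ∃ R : Bool → StratProf → Prop, R i s ∧
    (∀ t, R true t → ∃ c s', t = snode Agent.A c (sleaf f01) s' ∧ R false s') ∧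
    (∀ t, R false t → ∃ c s', t = snode Agent.B c (sleaf f10) s' ∧ R true s')

def S0 : StratProf → Prop := S01 true
def S1 : StratProf → Prop := S01 false

/-- One step of the `AcBes` condition. -/
def AcBesStep (R : StratProf → Prop) (s : StratProf) : Prop :=
  ∀ p c f s', s = snode p c (sleaf f) s' →
    (p = Agent.A ∧ f = f01 ∧ c = Choice.r ∧ R s') ∨
    (p = Agent.B ∧ f = f10 ∧ (c = Choice.d ∨ R s'))

/-- `AcBes`: "A continues and B eventually stops", the least predicate `R`
such that `AcBesStep R ≤ R` (impredicative encoding of the least fixed point). -/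
def AcBes (s : StratProf) : Prop :=
  ∀ R : StratProf → Prop, (∀ t, AcBesStep R t → R t) → R s

/-- One step of the `BcAes` condition. -/
def BcAesStep (R : StratProf → Prop) (s : StratProf) : Prop :=
  ∀ p c f s', s = snode p c (sleaf f) s' →
    (p = Agent.B ∧ f = f10 ∧ c = Choice.r ∧ R s') ∨
    (p = Agent.A ∧ f = f01 ∧ (c = Choice.d ∨ R s'))

/-- `BcAes`: "B continues and A eventually stops", symmetric to `AcBes`. -/
def BcAes (s : StratProf) : Prop :=
  ∀ R : StratProf → Prop, (∀ t, BcAesStep R t → R t) → R s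

def SAcBes : StratProf → Prop := Box AcBes
def SBcAes : StratProf → Prop := Box BcAes

/-! ### The 0,1-game `g01`, the escalation strategies and the all-continue profile -/

/-- Corecursion step for `g01` and `g10`:
`inl true ↦ g01`, `inl false ↦ g10`, `inr true ↦ ⟨f01⟩`, `inr false ↦ ⟨f10⟩`. -/
def g01Step : Bool ⊕ Bool → GameF.Obj (Bool ⊕ Bool)
  | Sum.inl true => ⟨Sum.inr Agent.A, fun (b : Bool) => if b then Sum.inr true else Sum.inl false⟩
  | Sum.inl false => ⟨Sum.inr Agent.B, fun (b : Bool) => if b then Sum.inr false else Sum.inl true⟩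
  | Sum.inr true => ⟨Sum.inl f01, fun (e : Empty) => e.elim⟩
  | Sum.inr false => ⟨Sum.inl f10, fun (e : Empty) => e.elim⟩

/-- The 0,1-game: `g01 = ⟨A, ⟨f01⟩, g10⟩` where `g10 = ⟨B, ⟨f10⟩, g01⟩`. -/
def g01 : Game := PFunctor.M.corec g01Step (Sum.inl true)

/-- `g10 = ⟨B, ⟨f10⟩, g01⟩`. -/
def g10 : Game := PFunctor.M.corec g01Step (Sum.inl false)

/-- Corecursion step for `st_{A,∞} = ⟨r, ⟨f01⟩, ⟨B, ⟨f10⟩, st_{A,∞}⟩⟩`. -/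
def stAinfStep : ℕ → StratF.Obj ℕ
  | 0 => ⟨Sum.inr (Sum.inr Choice.r), fun (b : Bool) => if b then 2 else 1⟩
  | 1 => ⟨Sum.inr (Sum.inl Agent.B), fun (b : Bool) => if b then 3 else 0⟩
  | 2 => ⟨Sum.inl f01, fun (e : Empty) => e.elim⟩
  | _ => ⟨Sum.inl f10, fun (e : Empty) => e.elim⟩

/-- The escalation strategy of `A`: `st_{A,∞} = ⟨r, ⟨f01⟩, ⟨B, ⟨f10⟩, st_{A,∞}⟩⟩`. -/
def stAinf : Strat := PFunctor.M.corec stAinfStep 0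

/-- Corecursion step for `st_{B,∞} = ⟨A, ⟨f01⟩, ⟨r, ⟨f10⟩, st_{B,∞}⟩⟩`. -/
def stBinfStep : ℕ → StratF.Obj ℕ
  | 0 => ⟨Sum.inr (Sum.inl Agent.A), fun (b : Bool) => if b then 2 else 1⟩
  | 1 => ⟨Sum.inr (Sum.inr Choice.r), fun (b : Bool) => if b then 3 else 0⟩
  | 2 => ⟨Sum.inl f01, fun (e : Empty) => e.elim⟩
  | _ => ⟨Sum.inl f10, fun (e : Empty) => e.elim⟩

/-- The escalation strategy of `B`: `st_{B,∞} = ⟨A, ⟨f01⟩, ⟨r, ⟨f10⟩, st_{B,∞}⟩⟩`. -/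
def stBinf : Strat := PFunctor.M.corec stBinfStep 0

/-- Corecursion step for the all-continue profile
`s_{A,∞} = ⟨⟨A, r, ⟨⟨f01⟩⟩, s_{B,∞}⟩⟩`, `s_{B,∞} = ⟨⟨B, r, ⟨⟨f10⟩⟩, s_{A,∞}⟩⟩`. -/
def sAinfStep : ℕ → StratProfF.Obj ℕ
  | 0 => ⟨Sum.inr (Agent.A, Choice.r), fun (b : Bool) => if b then 2 else 1⟩
  | 1 => ⟨Sum.inr (Agent.B, Choice.r), fun (b : Bool) => if b then 3 else 0⟩
  | 2 => ⟨Sum.inl f01, fun (e : Empty) => e.elim⟩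
  | _ => ⟨Sum.inl f10, fun (e : Empty) => e.elim⟩

/-- The all-continue profile `s_{A,∞}` of the 0,1-game. -/
def sAinf : StratProf := PFunctor.M.corec sAinfStep 0

/-- The profile `s_{B,∞}`. -/
def sBinf : StratProf := PFunctor.M.corec sAinfStep 1

/-- `s_□r`, the profile of the 0,1-game where both agents continue forever
(it satisfies `s_□r = ⟨⟨A, r, ⟨⟨f01⟩⟩, ⟨⟨B, r, ⟨⟨f10⟩⟩, s_□r⟩⟩⟩⟩`). -/
def sBoxr : StratProf := sAinf

/-- `s_{d□r} = ⟨⟨A, d, ⟨⟨f01⟩⟩, ⟨⟨B, r, ⟨⟨f10⟩⟩, s_□r⟩⟩⟩⟩`. -/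
def sdBoxr : StratProf :=
  snode Agent.A Choice.d (sleaf f01) (snode Agent.B Choice.r (sleaf f10) sBoxr)

/-! ### Finite games and profiles -/

/-- Finite strategy profiles. -/
inductive FinStratProf : Type
  | leaf (f : Payoffs)
  | node (p : Agent) (c : Choice) (sd sr : FinStratProf)

/-- Finite games. -/
inductive FinGame : Type
  | leaf (f : Payoffs)
  | node (p : Agent) (gd gr : FinGame)

/-- The (total) payoff function of a finite strategy profile. -/
def fpayoff : FinStratProf → Payoffs
  | FinStratProf.leaf f => f
  | FinStratProf.node _ Choice.d sd _ => fpayoff sd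
  | FinStratProf.node _ Choice.r _ sr => fpayoff sr

/-- The game of a finite strategy profile (erasing the choices). -/
def fgame : FinStratProf → FinGame
  | FinStratProf.leaf f => FinGame.leaf f
  | FinStratProf.node p _ sd sr => FinGame.node p (fgame sd) (fgame sr)

/-- Backward induction for finite strategy profiles. -/
inductive BI : FinStratProf → Prop
  | leaf (f : Payoffs) : BI (FinStratProf.leaf f)
  | node (p : Agent) (c : Choice) (sd sr : FinStratProf) :
      BI sd → BI sr →
      (c = Choice.d → fpayoff sd p ≥ fpayoff sr p) →
      (c = Choice.r → fpayoff sr p ≥ fpayoff sd p) →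
      BI (FinStratProf.node p c sd sr)

/-- The family `F01` of finite truncations of the 0,1-game (cut after `B`). -/
inductive F01 : FinGame → Prop
  | base : F01 (FinGame.leaf f01)
  | step (g : FinGame) : F01 g →
      F01 (FinGame.node Agent.A (FinGame.leaf f01) (FinGame.node Agent.B (FinGame.leaf f10) g))

/-- `SF01`: agent B always continues, agent A does whatever she likes. -/
inductive SF01 : FinStratProf → Prop
  | base : SF01 (FinStratProf.leaf f01)
  | step (c : Choice) (s' : FinStratProf) : SF01 s' →
      SF01 (FinStratProf.node Agent.A c (FinStratProf.leaf f01)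
        (FinStratProf.node Agent.B Choice.r (FinStratProf.leaf f10) s'))

mutual
  /-- The family `K01` of finite truncations of the 0,1-game (cut after `A`). -/
  inductive K01 : FinGame → Prop
    | step (g : FinGame) : K01' g → K01 (FinGame.node Agent.A (FinGame.leaf f01) g)
  /-- The auxiliary family `K01'`. -/
  inductive K01' : FinGame → Prop
    | base : K01' (FinGame.leaf f10)
    | step (g : FinGame) : K01 g → K01' (FinGame.node Agent.B (FinGame.leaf f10) g)
end

mutual
  /-- `SK01`: agent A always continues, agent B does whatever she likes. -/
  inductive SK01 : FinStratProf → Prop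
    | step (s' : FinStratProf) : SK01' s' →
        SK01 (FinStratProf.node Agent.A Choice.r (FinStratProf.leaf f01) s')
  /-- The auxiliary predicate `SK01'`. -/
  inductive SK01' : FinStratProf → Prop
    | base : SK01' (FinStratProf.leaf f10)
    | step (c : Choice) (s' : FinStratProf) : SK01 s' →
        SK01' (FinStratProf.node Agent.B c (FinStratProf.leaf f10) s')
end

/-!
Each agent continues forever:
`st_{A,∞} = ⟨r, ⟨f01⟩, ⟨B, ⟨f10⟩, st_{A,∞}⟩⟩` and `st_{B,∞} = ⟨A, ⟨f01⟩, ⟨r, ⟨f10⟩, st_{B,∞}⟩⟩`.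
All objects involved are corecursive images of finite-state coalgebras, so identities such as
`st2g st_{A,∞} A = g01` and `st_{A,∞} ⊕ st_{B,∞} = s_□r` follow from uniqueness of corecursion once
a map between the state spaces is checked to be a coalgebra morphism. The profile `s_□r` always
chooses `r` and only ever visits its two nodes, so the chosen path never reaches a leaf.
-/

universe uA uB

namespace PFunctor.M

variable {P : PFunctor.{uA, uB}} {α β : Type*}

theorem corec_comp_of_map_eq (gα : α → P α) (gβ : β → P β) (φ : α → β)
    (h : ∀ x, gβ (φ x) = P.map φ (gα x)) : M.corec gβ ∘ φ = M.corec gα :=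
  corec_unique gα _ fun x => by
    rw [Function.comp_apply, dest_corec, h, PFunctor.map_map]

end PFunctor.M

open PFunctor

section Corec

variable {α : Type*}

theorem corec_eq_stleaf {g : α → StratF.Obj α} {x : α} {f : Payoffs} {k : Empty → α}
    (h : g x = ⟨Sum.inl f, k⟩) : M.corec g x = stleaf f := by
  rw [M.corec_def, h]
  exact congrArg M.mk (Sigma.ext rfl (heq_of_eq (funext nofun)))

theorem corec_eq_stnode {g : α → StratF.Obj α} {x : α} {l : Agent ⊕ Choice} {k : Bool → α}
    (h : g x = ⟨Sum.inr l, k⟩) :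
    M.corec g x = stnode l (M.corec g (k true)) (M.corec g (k false)) := by
  rw [M.corec_def, h]
  exact congrArg M.mk (Sigma.ext rfl (heq_of_eq (funext fun b => by cases b <;> rfl)))

theorem corec_eq_snode {g : α → StratProfF.Obj α} {x : α} {p : Agent} {c : Choice}
    {k : Bool → α} (h : g x = ⟨Sum.inr (p, c), k⟩) :
    M.corec g x = snode p c (M.corec g (k true)) (M.corec g (k false)) := by
  rw [M.corec_def, h]
  exact congrArg M.mk (Sigma.ext rfl (heq_of_eq (funext fun b => by cases b <;> rfl)))

theorem full_corec {p : Agent} (g : α → StratF.Obj α) (hg : ∀ x, (g x).1 ≠ Sum.inr (Sum.inl p))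
    (x : α) : Full p (M.corec g x) := by
  refine ⟨Set.range (M.corec g), ⟨x, rfl⟩, ?_⟩
  rintro _ ⟨y, rfl⟩
  match hy : g y with
  | ⟨Sum.inl f, k⟩ => exact Or.inl ⟨f, corec_eq_stleaf hy⟩
  | ⟨Sum.inr l, k⟩ =>
    refine Or.inr ⟨l, _, _, corec_eq_stnode hy, fun hl => hg y ?_, ⟨_, rfl⟩, ⟨_, rfl⟩⟩
    rw [hy, hl]

end Corec

theorem sleaf_ne_snode (f : Payoffs) (p : Agent) (c : Choice) (sd sr : StratProf) :
    sleaf f ≠ snode p c sd sr := fun h =>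
  Sum.inl_ne_inr (congrArg Sigma.fst (M.mk_inj h))

theorem snode_inj {p p' : Agent} {c c' : Choice} {sd sr sd' sr' : StratProf}
    (h : snode p c sd sr = snode p' c' sd' sr') : p = p' ∧ c = c' ∧ sd = sd' ∧ sr = sr' := by
  obtain ⟨hpc, hk⟩ := Sigma.mk.inj (M.mk_inj h)
  obtain ⟨rfl, rfl⟩ := Prod.mk.inj (Sum.inr.inj hpc)
  have hk := eq_of_heq hk
  exact ⟨rfl, rfl, by simpa using congrFun hk true, by simpa using congrFun hk false⟩

theorem not_conv_of_forall_mem {S : Set StratProf}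
    (hS : ∀ s ∈ S, ∃ p c sd sr, s = snode p c sd sr ∧
      (c = Choice.d → sd ∈ S) ∧ (c = Choice.r → sr ∈ S)) {s : StratProf} (hs : s ∈ S) :
    ¬ Conv s := by
  intro h
  induction h with
  | leaf f =>
    obtain ⟨_, _, _, _, he, -⟩ := hS _ hs
    exact sleaf_ne_snode _ _ _ _ _ he
  | down p sd sr _ ih =>
    obtain ⟨_, _, _, _, he, hd, -⟩ := hS _ hs
    obtain ⟨-, rfl, rfl, -⟩ := snode_inj he
    exact ih (hd rfl)
  | right p sd sr _ ih =>
    obtain ⟨_, _, _, _, he, -, hr⟩ := hS _ hs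
    obtain ⟨-, rfl, -, rfl⟩ := snode_inj he
    exact ih (hr rfl)

/-- Sends the states of `g01Step` to the matching states of `stAinfStep` and `stBinfStep`. -/
def g01Index : Bool ⊕ Bool → ℕ
  | Sum.inl true => 0
  | Sum.inl false => 1
  | Sum.inr true => 2
  | Sum.inr false => 3

theorem st2g_stAinf : st2g stAinf Agent.A = g01 := by
  refine congrFun (M.corec_comp_of_map_eq g01Step (st2gStep Agent.A)
    (M.corec stAinfStep ∘ g01Index) ?_) (Sum.inl true)
  rintro ((_ | _) | (_ | _)) <;>
    rw [st2gStep, Function.comp_apply, M.dest_corec] <;>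
    exact Sigma.ext rfl (heq_of_eq (funext fun b => by cases b <;> rfl))

theorem st2g_stBinf : st2g stBinf Agent.B = g01 := by
  refine congrFun (M.corec_comp_of_map_eq g01Step (st2gStep Agent.B)
    (M.corec stBinfStep ∘ g01Index) ?_) (Sum.inl true)
  rintro ((_ | _) | (_ | _)) <;>
    rw [st2gStep, Function.comp_apply, M.dest_corec] <;>
    exact Sigma.ext rfl (heq_of_eq (funext fun b => by cases b <;> rfl))

theorem oplus_stAinf_stBinf : oplus stAinf stBinf = sBoxr := by
  refine congrFun (M.corec_comp_of_map_eq sAinfStep oplusStep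
    (fun n => (M.corec stAinfStep n, M.corec stBinfStep n)) ?_) 0
  rintro (_ | _ | _ | _) <;>
    simp only [oplusStep, stratView, M.dest_corec] <;>
    exact Sigma.ext rfl (heq_of_eq (funext fun b => by cases b <;> rfl))

theorem full_stAinf : Full Agent.A stAinf :=
  full_corec stAinfStep (by rintro (_ | _ | _ | _) ⟨⟩) 0

theorem full_stBinf : Full Agent.B stBinf :=
  full_corec stBinfStep (by rintro (_ | _ | _ | _) ⟨⟩) 0

theorem not_conv_sBoxr : ¬ Conv sBoxr := by
  refine not_conv_of_forall_mem (S := {sAinf, sBinf}) ?_ (Or.inl rfl)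
  rintro s (rfl | rfl)
  · exact ⟨_, _, _, _, corec_eq_snode rfl, nofun, fun _ => Or.inr rfl⟩
  · exact ⟨_, _, _, _, corec_eq_snode rfl, nofun, fun _ => Or.inl rfl⟩

/-- escalation occurs in the 0,1-game. -/
theorem escalation :
    ∃ stA stB : Strat, Full Agent.A stA ∧ Full Agent.B stB ∧
      st2g stA Agent.A = g01 ∧ st2g stB Agent.B = g01 ∧ ¬ Conv (oplus stA stB) :=
  ⟨stAinf, stBinf, full_stAinf, full_stBinf, st2g_stAinf, st2g_stBinf,
    oplus_stAinf_stBinf ▸ not_conv_sBoxr⟩
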